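/- arXiv:2010.12060 — 2 statements merged into one kernel-verified Lean document; each statement's English description precedes it below -/
import Mathlib

section
/- Let K ⊆ ℝ^d be a compact set and let σ : ℝ → ℝ be a continuous, bounded, non-constant function. Then for every continuous function f : K → ℝ and every ε > 0 there exist N ∈ ℕ and coefficients c₁,…,c_N ∈ ℝ, weight vectors w₁,…,w_N ∈ ℝ^d and biases b₁,…,b_N ∈ ℝ such that sup_{x ∈ K} |f(x) − Σ_{i=1}^N cᵢ · σ(⟨wᵢ, x⟩ + bᵢ)| ≤ ε, where ⟨·,·⟩ denotes the Euclidean inner product on ℝ^d. -/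
open Finset intervalIntegral

open Finset

/-- `g` is approximable, uniformly on every symmetric compact interval, by
one-dimensional `σ`-networks. -/
def Approx1 (σ g : ℝ → ℝ) : Prop :=
  ∀ R : ℝ, 0 < R → ∀ ε : ℝ, 0 < ε → ∃ (N : ℕ) (c l b : Fin N → ℝ),
    ∀ t : ℝ, |t| ≤ R → |g t - ∑ i, c i * σ (l i * t + b i)| ≤ ε

theorem approx1_self (σ : ℝ → ℝ) : Approx1 σ σ := by
  intro R hR ε hε
  refine ⟨1, fun _ => 1, fun _ => 1, fun _ => 0, fun t ht => ?_⟩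
  simp
  positivity

theorem approx1_zero (σ : ℝ → ℝ) : Approx1 σ (fun _ => 0) := by
  intro R hR ε hε
  exact ⟨0, Fin.elim0, Fin.elim0, Fin.elim0, fun t ht => by simp; positivity⟩

theorem approx1_add {σ g h : ℝ → ℝ} (hg : Approx1 σ g) (hh : Approx1 σ h) :
    Approx1 σ (fun t => g t + h t) := by
  intro R hR ε hε
  obtain ⟨N, c, l, b, hN⟩ := hg R hR (ε/2) (by positivity)
  obtain ⟨M, c', l', b', hM⟩ := hh R hR (ε/2) (by positivity)
  refine ⟨N + M, Fin.append c c', Fin.append l l', Fin.append b b', fun t ht => ?_⟩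
  rw [Fin.sum_univ_add]
  simp only [Fin.append_left, Fin.append_right]
  have e : g t + h t - (∑ i : Fin N, c i * σ (l i * t + b i)
      + ∑ i : Fin M, c' i * σ (l' i * t + b' i))
      = (g t - ∑ i : Fin N, c i * σ (l i * t + b i))
      + (h t - ∑ i : Fin M, c' i * σ (l' i * t + b' i)) := by ring
  rw [e]
  calc _ ≤ _ := abs_add_le _ _
    _ ≤ ε/2 + ε/2 := add_le_add (hN t ht) (hM t ht)
    _ = ε := by ring

theorem approx1_smul {σ g : ℝ → ℝ} (a : ℝ) (hg : Approx1 σ g) :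
    Approx1 σ (fun t => a * g t) := by
  intro R hR ε hε
  rcases eq_or_ne a 0 with rfl | ha
  · refine ⟨0, Fin.elim0, Fin.elim0, Fin.elim0, fun t ht => by simp; positivity⟩
  · obtain ⟨N, c, l, b, hN⟩ := hg R hR (ε / |a|) (by positivity)
    refine ⟨N, fun i => a * c i, l, b, fun t ht => ?_⟩
    have e : a * g t - ∑ i : Fin N, a * c i * σ (l i * t + b i)
        = a * (g t - ∑ i : Fin N, c i * σ (l i * t + b i)) := by
      rw [mul_sub, Finset.mul_sum]; simp only [mul_assoc]
    rw [e, abs_mul]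
    calc |a| * |g t - ∑ i : Fin N, c i * σ (l i * t + b i)| ≤ |a| * (ε / |a|) :=
          mul_le_mul_of_nonneg_left (hN t ht) (abs_nonneg a)
      _ = ε := by field_simp

theorem approx1_sub {σ g h : ℝ → ℝ} (hg : Approx1 σ g) (hh : Approx1 σ h) :
    Approx1 σ (fun t => g t - h t) := by
  have := approx1_add hg (approx1_smul (-1) hh)
  simpa [sub_eq_add_neg] using this

theorem approx1_sum {σ : ℝ → ℝ} {ι : Type*} (s : Finset ι) (F : ι → ℝ → ℝ)
    (hF : ∀ i ∈ s, Approx1 σ (F i)) : Approx1 σ (fun t => ∑ i ∈ s, F i t) := by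
  classical
  induction s using Finset.induction_on with
  | empty => simpa using approx1_zero σ
  | insert _ _ hx ih =>
    rename_i a s'
    simp only [Finset.sum_insert hx]
    exact approx1_add (hF a (Finset.mem_insert_self a s'))
      (ih fun i hi => hF i (Finset.mem_insert_of_mem hi))

/-- approximability is stable under affine precomposition. -/
theorem approx1_affine {σ g : ℝ → ℝ} (a r : ℝ) (hg : Approx1 σ g) :
    Approx1 σ (fun t => g (a * t + r)) := by
  intro R hR ε hε
  obtain ⟨N, c, l, b, hN⟩ := hg (|a| * R + |r| + 1) (by positivity) ε hε
  refine ⟨N, c, fun i => l i * a, fun i => l i * r + b i, fun t ht => ?_⟩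
  have h1 : |a * t + r| ≤ |a| * R + |r| + 1 := by
    calc |a * t + r| ≤ |a * t| + |r| := abs_add_le _ _
      _ ≤ |a| * R + |r| + 1 := by
        rw [abs_mul]
        have : |a| * |t| ≤ |a| * R := mul_le_mul_of_nonneg_left ht (abs_nonneg a)
        linarith
  have := hN (a * t + r) h1
  have e : ∀ i : Fin N, c i * σ (l i * a * t + (l i * r + b i))
      = c i * σ (l i * (a * t + r) + b i) := by
    intro i; congr 2; ring
  simpa only [e] using this

/-- If `g` can be uniformly approximated on every compact interval by approximable
functions, then `g` is itself approximable. -/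
theorem approx1_of_near {σ g : ℝ → ℝ}
    (h : ∀ R : ℝ, 0 < R → ∀ ε : ℝ, 0 < ε →
      ∃ g', Approx1 σ g' ∧ ∀ t : ℝ, |t| ≤ R → |g t - g' t| ≤ ε) :
    Approx1 σ g := by
  intro R hR ε hε
  obtain ⟨g', hg', hclose⟩ := h R hR (ε/2) (by positivity)
  obtain ⟨N, c, l, b, hN⟩ := hg' R hR (ε/2) (by positivity)
  refine ⟨N, c, l, b, fun t ht => ?_⟩
  have e : g t - ∑ i : Fin N, c i * σ (l i * t + b i)
      = (g t - g' t) + (g' t - ∑ i : Fin N, c i * σ (l i * t + b i)) := by ring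
  rw [e]
  calc _ ≤ _ := abs_add_le _ _
    _ ≤ ε/2 + ε/2 := add_le_add (hclose t ht) (hN t ht)
    _ = ε := by ring

section Riemann
variable {σ : ℝ → ℝ}



theorem approx1_integral_aux (hσ : Continuous σ) (φ : ℝ → ℝ) (hφ : Continuous φ)
    (A : ℝ) (hA : 0 < A) :
    ∀ R : ℝ, 0 < R → ∀ ε : ℝ, 0 < ε → ∃ (N : ℕ) (c l b : Fin N → ℝ),
      ∀ t : ℝ, |t| ≤ R →
        |(∫ y in (-A)..A, φ y * σ (t - y)) - ∑ i, c i * σ (l i * t + b i)| ≤ ε := by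
  intro R hR ε hε
  set F : ℝ × ℝ → ℝ := fun p => φ p.2 * σ (p.1 - p.2) with hFdef
  have hF : Continuous F := (hφ.comp continuous_snd).mul (hσ.comp (continuous_fst.sub continuous_snd))
  set S : Set (ℝ × ℝ) := Set.Icc (-R) R ×ˢ Set.Icc (-A) A with hSdef
  have hUC : UniformContinuousOn F S :=
    ((isCompact_Icc).prod isCompact_Icc).uniformContinuousOn_of_continuous hF.continuousOn
  rw [Metric.uniformContinuousOn_iff] at hUC
  obtain ⟨δ, hδ, hUC⟩ := hUC (ε / (2 * A)) (by positivity)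
  obtain ⟨n, hn⟩ := exists_nat_gt (2 * A / δ)
  have hn0 : 0 < (n : ℝ) := lt_of_lt_of_le (by positivity) hn.le
  set s : ℝ := 2 * A / n with hsdef
  have hs0 : 0 < s := by positivity
  have hsδ : s < δ := by
    rw [hsdef, div_lt_iff₀ hn0]
    nlinarith [mul_lt_mul_of_pos_right hn hδ, (by field_simp : (2 * A / δ) * δ = 2 * A)]
  set y : ℕ → ℝ := fun j => -A + s * j with hydef
  have hy0 : y 0 = -A := by simp [hydef]
  have hsn : s * n = 2 * A := by rw [hsdef]; field_simp
  have hyn : y n = A := by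
    simp only [hydef]; linarith
  have hymem : ∀ j : ℕ, j ≤ n → y j ∈ Set.Icc (-A) A := by
    intro j hj
    constructor
    · have : (0:ℝ) ≤ s * j := by positivity
      simp only [hydef]; linarith
    · have : s * j ≤ s * n := by
        apply mul_le_mul_of_nonneg_left _ hs0.le
        exact_mod_cast hj
      have h2 : s * n = 2 * A := by rw [hsdef]; field_simp
      simp only [hydef]; linarith
  -- the network
  refine ⟨n, fun j => φ (y j) * s, fun _ => 1, fun j => -(y j), fun t ht => ?_⟩
  have htI : t ∈ Set.Icc (-R) R := abs_le.mp ht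
  have hfc : ∀ j, IntervalIntegrable (fun u => φ u * σ (t - u)) MeasureTheory.volume (y j) (y (j+1)) := by
    intro j
    exact ((hφ.mul (hσ.comp (continuous_const.sub continuous_id))).intervalIntegrable _ _)
  have hsplit : ∑ j ∈ Finset.range n, (∫ u in (y j)..(y (j+1)), φ u * σ (t - u))
      = ∫ u in (-A)..A, φ u * σ (t - u) := by
    have := intervalIntegral.sum_integral_adjacent_intervals (a := y) (n := n)
      (f := fun u => φ u * σ (t - u)) (fun k _ => hfc k)
    rw [hy0, hyn] at this
    exact this
  rw [← hsplit]
  have hterm : ∀ j : Fin n, (fun j : Fin n => φ (y j) * s * σ (1 * t + -(y j))) j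
      = ∫ _ in (y j)..(y (j+1)), φ (y j) * σ (t - y j) := by
    intro j
    rw [intervalIntegral.integral_const]
    have : y (j+1) - y j = s := by simp only [hydef]; push_cast; ring
    rw [this]
    simp only [smul_eq_mul, one_mul]
    ring_nf
  rw [Fin.sum_univ_eq_sum_range (fun j => φ (y j) * s * σ (1 * t + -(y j))) n]
  have key : ∀ j ∈ Finset.range n,
      |(∫ u in (y j)..(y (j+1)), φ u * σ (t - u)) - φ (y j) * s * σ (1 * t + -(y j))| ≤ ε / (2*A) * s := by
    intro j hj
    rw [Finset.mem_range] at hj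
    have e1 : φ (y j) * s * σ (1 * t + -(y j)) = ∫ _ in (y j)..(y (j+1)), φ (y j) * σ (t - y j) := by
      rw [intervalIntegral.integral_const]
      have : y (j+1) - y j = s := by simp only [hydef]; push_cast; ring
      rw [this]; simp only [smul_eq_mul, one_mul]; ring_nf
    rw [e1, ← intervalIntegral.integral_sub (hfc j) (intervalIntegrable_const)]
    have hyj : y j ≤ y (j+1) := by
      have : (0:ℝ) ≤ s := hs0.le
      simp only [hydef]; push_cast; nlinarith
    have hb : ∀ u ∈ Set.uIoc (y j) (y (j+1)), ‖φ u * σ (t - u) - φ (y j) * σ (t - y j)‖ ≤ ε / (2*A) := by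
      intro u hu
      rw [Set.uIoc_of_le hyj] at hu
      have hu1 : y j ≤ u := le_of_lt hu.1
      have hu2 : u ≤ y (j+1) := hu.2
      have hjmem := hymem j (Nat.le_of_lt hj)
      have hj1mem := hymem (j+1) hj
      have humem : u ∈ Set.Icc (-A) A := ⟨le_trans hjmem.1 hu1, le_trans hu2 hj1mem.2⟩
      have h1 : ((t, u) : ℝ × ℝ) ∈ S := ⟨htI, humem⟩
      have h2 : ((t, y j) : ℝ × ℝ) ∈ S := ⟨htI, hjmem⟩
      have hdist : dist ((t, u) : ℝ × ℝ) ((t, y j)) < δ := by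
        rw [Prod.dist_eq]
        simp only [dist_self]
        rw [sup_lt_iff]
        refine ⟨hδ, ?_⟩
        rw [Real.dist_eq, abs_of_nonneg (by linarith)]
        have hstep : y (j+1) - y j = s := by simp only [hydef]; push_cast; ring
        linarith
      have := hUC _ h1 _ h2 hdist
      rw [Real.dist_eq] at this
      exact le_of_lt this
    calc |∫ u in (y j)..(y (j+1)), (φ u * σ (t - u) - φ (y j) * σ (t - y j))|
        ≤ ε / (2*A) * |y (j+1) - y j| := intervalIntegral.norm_integral_le_of_norm_le_const hb
      _ = ε / (2*A) * s := by
          congr 1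
          rw [abs_of_nonneg (by linarith [hyj] : (0:ℝ) ≤ y (j+1) - y j)]
          simp only [hydef]; push_cast; ring
  calc |(∑ j ∈ Finset.range n, ∫ u in (y j)..(y (j+1)), φ u * σ (t - u))
        - ∑ j ∈ Finset.range n, φ (y j) * s * σ (1 * t + -(y j))|
      = |∑ j ∈ Finset.range n, ((∫ u in (y j)..(y (j+1)), φ u * σ (t - u))
          - φ (y j) * s * σ (1 * t + -(y j)))| := by rw [Finset.sum_sub_distrib]
    _ ≤ ∑ j ∈ Finset.range n, |(∫ u in (y j)..(y (j+1)), φ u * σ (t - u))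
          - φ (y j) * s * σ (1 * t + -(y j))| := Finset.abs_sum_le_sum_abs _ _
    _ ≤ ∑ _j ∈ Finset.range n, ε / (2*A) * s := Finset.sum_le_sum key
    _ = n * (ε / (2*A) * s) := by rw [Finset.sum_const, Finset.card_range, nsmul_eq_mul]
    _ = ε := by rw [hsdef]; field_simp

theorem taylor_bound (k : ℕ) : ∀ (g : ℝ → ℝ), ContDiff ℝ (⊤ : ℕ∞) g → ∀ (θ r ε : ℝ), 0 ≤ r → 0 ≤ ε →
    (∀ u : ℝ, |u - θ| ≤ r → |iteratedDeriv k g u - iteratedDeriv k g θ| ≤ ε) →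
    ∀ x : ℝ, |x - θ| ≤ r →
      |g x - ∑ j ∈ Finset.range (k+1), iteratedDeriv j g θ * (x - θ)^j / (j.factorial : ℝ)|
        ≤ ε * r ^ k := by
  induction k with
  | zero =>
    intro g hg θ r ε hr hε hmod x hx
    simpa using hmod x hx
  | succ k ih =>
    intro g hg θ r ε hr hε hmod x hx
    set P : ℝ → ℝ := fun x => ∑ j ∈ Finset.range (k+2),
      iteratedDeriv j g θ * (x - θ)^j / (j.factorial : ℝ) with hPdef
    set Q : ℝ → ℝ := fun x => ∑ j ∈ Finset.range (k+1),
      iteratedDeriv (j+1) g θ * (x - θ)^j / (j.factorial : ℝ) with hQdef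
    have hgd : Differentiable ℝ g := hg.differentiable (by simp)
    have hg' : ContDiff ℝ (⊤ : ℕ∞) (deriv g) := (contDiff_infty_iff_deriv.mp hg).2
    have hP : ∀ z : ℝ, HasDerivAt P (Q z) z := by
      intro z
      have h1 : ∀ j ∈ Finset.range (k+2), HasDerivAt
          (fun x : ℝ => iteratedDeriv j g θ * (x - θ)^j / (j.factorial : ℝ))
          (iteratedDeriv j g θ * ((j : ℝ) * (z - θ)^(j-1) * 1) / (j.factorial : ℝ)) z := by
        intro j _
        exact (((hasDerivAt_id z).sub_const θ).pow j).const_mul (iteratedDeriv j g θ) |>.div_const _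
      have h2 := HasDerivAt.sum h1
      have e : ∑ j ∈ Finset.range (k+2),
          iteratedDeriv j g θ * ((j : ℝ) * (z - θ)^(j-1) * 1) / (j.factorial : ℝ) = Q z := by
        rw [Finset.sum_range_succ']
        simp only [Nat.cast_zero, zero_mul, mul_zero, zero_div, add_zero, mul_one, Nat.cast_ofNat,
          Nat.factorial_zero, Nat.cast_one]
        rw [hQdef]
        apply Finset.sum_congr rfl
        intro j _
        simp only [Nat.add_sub_cancel, Nat.factorial_succ, Nat.cast_mul]
        push_cast
        field_simp
      rw [e] at h2
      rw [Finset.sum_fn] at h2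
      convert h2 using 1
    have hF : ∀ z : ℝ, HasDerivAt (fun x => g x - P x) (deriv g z - Q z) z := by
      intro z
      exact ((hgd z).hasDerivAt).sub (hP z)
    -- bound the derivative on the closed ball
    have hmod' : ∀ u : ℝ, |u - θ| ≤ r →
        |iteratedDeriv k (deriv g) u - iteratedDeriv k (deriv g) θ| ≤ ε := by
      intro u hu
      rw [← iteratedDeriv_succ']
      exact hmod u hu
    have hbound : ∀ z : ℝ, |z - θ| ≤ r → |deriv g z - Q z| ≤ ε * r ^ k := by
      intro z hz
      have := ih (deriv g) hg' θ r ε hr hε hmod' z hz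
      have e : Q z = ∑ j ∈ Finset.range (k+1),
          iteratedDeriv j (deriv g) θ * (z - θ)^j / (j.factorial : ℝ) := by
        rw [hQdef]
        apply Finset.sum_congr rfl
        intro j _
        rw [iteratedDeriv_succ']
      rw [e]
      exact this
    -- mean value inequality on the closed ball
    set s : Set ℝ := Metric.closedBall θ r with hsdef
    have hmem : ∀ z : ℝ, z ∈ s ↔ |z - θ| ≤ r := by
      intro z; rw [Metric.mem_closedBall, Real.dist_eq]
    have hmv := Convex.norm_image_sub_le_of_norm_hasDerivWithin_le
      (f := fun x => g x - P x) (f' := fun z => deriv g z - Q z) (C := ε * r ^ k) (s := s)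
      (fun z hz => (hF z).hasDerivWithinAt)
      (fun z hz => hbound z ((hmem z).mp hz)) (convex_closedBall θ r)
      ((hmem θ).mpr (by simpa using hr)) ((hmem x).mpr hx)
    have hPθ : P θ = g θ := by
      show (∑ j ∈ Finset.range (k+2), iteratedDeriv j g θ * (θ - θ)^j / (j.factorial : ℝ)) = g θ
      rw [Finset.sum_eq_single 0]
      · simp
      · intro j _ hj
        simp [zero_pow hj, sub_self]
      · simp
    have hmv2 : |g x - P x| ≤ ε * r ^ k * |x - θ| := by
      simpa [hPθ, Real.norm_eq_abs] using hmv
    show |g x - P x| ≤ ε * r ^ (k + 1)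
    calc |g x - P x| ≤ ε * r ^ k * |x - θ| := hmv2
      _ ≤ ε * r ^ k * r := by
          apply mul_le_mul_of_nonneg_left (hx.trans_eq rfl)
          positivity
      _ = ε * r ^ (k+1) := by ring

open Finset MeasureTheory Convolution Function

noncomputable def bconv (φ : ContDiffBump (0:ℝ)) (σ : ℝ → ℝ) : ℝ → ℝ :=
  (φ.normed volume) ⋆[ContinuousLinearMap.lsmul ℝ ℝ, volume] σ

variable {σ : ℝ → ℝ} (φ : ContDiffBump (0:ℝ))

theorem bconv_contDiff (hσ : Continuous σ) : ContDiff ℝ (⊤ : ℕ∞) (bconv φ σ) :=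
  HasCompactSupport.contDiff_convolution_left _ φ.hasCompactSupport_normed
    φ.contDiff_normed (hσ.locallyIntegrable)

theorem bconv_eq (hσ : Continuous σ) (x : ℝ) :
    bconv φ σ x = ∫ y in (-φ.rOut)..φ.rOut, φ.normed volume y * σ (x - y) := by
  rw [bconv, MeasureTheory.convolution]
  simp only [ContinuousLinearMap.lsmul_apply, smul_eq_mul]
  rw [intervalIntegral.integral_eq_integral_of_support_subset]
  intro y hy
  have h1 : φ.normed volume y ≠ 0 := by
    intro h0
    apply hy
    simp [h0]
  have h2 : y ∈ Metric.ball (0:ℝ) φ.rOut := by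
    rw [← φ.support_normed_eq (μ := volume)]
    exact h1
  rw [Metric.mem_ball, Real.dist_eq, sub_zero] at h2
  rw [abs_lt] at h2
  exact ⟨h2.1, h2.2.le⟩

theorem bconv_bound {M : ℝ} (hσ : Continuous σ) (hM : ∀ t, |σ t| ≤ M) (x : ℝ) :
    |bconv φ σ x| ≤ M := by
  have hM0 : 0 ≤ M := le_trans (abs_nonneg _) (hM 0)
  rw [bconv, MeasureTheory.convolution]
  simp only [ContinuousLinearMap.lsmul_apply, smul_eq_mul]
  rw [← Real.norm_eq_abs]
  calc ‖∫ y, φ.normed volume y * σ (x - y)‖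
      ≤ ∫ y, M * φ.normed volume y := by
        apply MeasureTheory.norm_integral_le_of_norm_le (φ.integrable_normed.const_mul M)
        filter_upwards with y
        rw [Real.norm_eq_abs, abs_mul, abs_of_nonneg (φ.nonneg_normed y)]
        calc φ.normed volume y * |σ (x - y)| ≤ φ.normed volume y * M :=
              mul_le_mul_of_nonneg_left (hM _) (φ.nonneg_normed y)
          _ = M * φ.normed volume y := by ring
    _ = M := by rw [MeasureTheory.integral_const_mul, φ.integral_normed, mul_one]

theorem bconv_approx (hσ : Continuous σ) : Approx1 σ (bconv φ σ) := by
  have := approx1_integral_aux (σ := σ) hσ (φ.normed volume) φ.continuous_normed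
    φ.rOut φ.rOut_pos
  intro R hR ε hε
  obtain ⟨N, c, l, b, h⟩ := this R hR ε hε
  exact ⟨N, c, l, b, fun t ht => by rw [bconv_eq φ hσ]; exact h t ht⟩



section
variable {σ : ℝ → ℝ}

theorem good_case (hσ_cont : Continuous σ) (hσ_bdd : ∃ M : ℝ, ∀ t : ℝ, |σ t| ≤ M)
    (hσ_nonconst : ∃ s t : ℝ, σ s ≠ σ t) :
    ∀ k : ℕ, ∃ (φ : ContDiffBump (0:ℝ)) (θ : ℝ), iteratedDeriv k (bconv φ σ) θ ≠ 0 := by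
  by_contra hbad
  push_neg at hbad
  obtain ⟨k, hk⟩ := hbad
  obtain ⟨M, hM⟩ := hσ_bdd
  -- every mollification is a bounded polynomial, hence constant
  have hconst : ∀ φ : ContDiffBump (0:ℝ), ∀ x : ℝ, bconv φ σ x = bconv φ σ 0 := by
    intro φ x
    set g := bconv φ σ with hg
    have hsm : ContDiff ℝ (⊤ : ℕ∞) g := bconv_contDiff φ hσ_cont
    have hpoly : ∀ z : ℝ, g z = ∑ j ∈ Finset.range (k+1),
        iteratedDeriv j g 0 * z ^ j / (j.factorial : ℝ) := by
      intro z
      have := taylor_bound k g hsm 0 (|z|) 0 (abs_nonneg z) le_rfl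
        (fun u _ => by rw [hk φ u, hk φ 0]; simp) z (by simp)
      simp only [sub_zero, zero_mul] at this
      have h0 : |g z - ∑ j ∈ Finset.range (k+1),
          iteratedDeriv j g 0 * z ^ j / (j.factorial : ℝ)| ≤ 0 := this
      have := abs_nonneg (g z - ∑ j ∈ Finset.range (k+1),
          iteratedDeriv j g 0 * z ^ j / (j.factorial : ℝ))
      have heq : |g z - ∑ j ∈ Finset.range (k+1),
          iteratedDeriv j g 0 * z ^ j / (j.factorial : ℝ)| = 0 := le_antisymm h0 this
      rw [abs_eq_zero, sub_eq_zero] at heq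
      exact heq
    set p : Polynomial ℝ := ∑ j ∈ Finset.range (k+1),
      Polynomial.C (iteratedDeriv j g 0 / (j.factorial : ℝ)) * Polynomial.X ^ j with hp
    have hpeval : ∀ z : ℝ, p.eval z = g z := by
      intro z
      rw [hpoly z, hp]
      simp only [Polynomial.eval_finset_sum, Polynomial.eval_mul, Polynomial.eval_pow,
        Polynomial.eval_C, Polynomial.eval_X]
      apply Finset.sum_congr rfl
      intro j _
      ring
    have hdeg : p.degree ≤ 0 := by
      by_contra hd
      push_neg at hd
      have := Polynomial.abs_tendsto_atTop p hd
      obtain ⟨z, hz⟩ := (this.eventually (Filter.eventually_gt_atTop M)).exists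
      have := bconv_bound φ hσ_cont hM z
      rw [← hg, ← hpeval z] at this
      linarith
    have := Polynomial.eq_C_of_degree_le_zero hdeg
    rw [← hpeval x, ← hpeval 0, this]
    simp
  -- hence σ is constant: contradiction
  obtain ⟨s, t, hst⟩ := hσ_nonconst
  apply hst
  -- shrinking bumps
  set φn : ℕ → ContDiffBump (0:ℝ) := fun n =>
    ⟨((n:ℝ)+1)⁻¹, 2*((n:ℝ)+1)⁻¹, by positivity, by
      have : (0:ℝ) < ((n:ℝ)+1)⁻¹ := by positivity
      linarith⟩ with hφn
  have hrout : Filter.Tendsto (fun n => (φn n).rOut) Filter.atTop (nhds 0) := by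
    have h1 : Filter.Tendsto (fun n : ℕ => ((n:ℝ)+1)⁻¹) Filter.atTop (nhds 0) := by
      simpa [one_div] using tendsto_one_div_add_atTop_nhds_zero_nat (𝕜 := ℝ)
    have := h1.const_mul (2:ℝ)
    simpa [hφn] using this
  have hs := ContDiffBump.convolution_tendsto_right_of_continuous (μ := volume)
    hrout hσ_cont s
  have ht := ContDiffBump.convolution_tendsto_right_of_continuous (μ := volume)
    hrout hσ_cont t
  have hse : (fun n => ((φn n).normed volume ⋆[ContinuousLinearMap.lsmul ℝ ℝ, volume] σ) s)
      = fun n => ((φn n).normed volume ⋆[ContinuousLinearMap.lsmul ℝ ℝ, volume] σ) t := by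
    funext n
    have h1 := hconst (φn n) s
    have h2 := hconst (φn n) t
    rw [bconv] at h1 h2
    rw [h1, h2]
  rw [hse] at hs
  exact tendsto_nhds_unique hs ht
end

open Finset MeasureTheory Convolution Function

section
variable {σ : ℝ → ℝ}

theorem approx1_monomial (hσ_cont : Continuous σ)
    (hgood : ∀ k : ℕ, ∃ (g : ℝ → ℝ) (θ : ℝ),
      ContDiff ℝ (⊤ : ℕ∞) g ∧ Approx1 σ g ∧ iteratedDeriv k g θ ≠ 0) :
    ∀ k : ℕ, Approx1 σ (fun t => t ^ k) := by
  intro k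
  induction k using Nat.strong_induction_on with
  | _ k ih =>
  obtain ⟨g, θ, hsm, hap, hne⟩ := hgood k
  set c := iteratedDeriv k g θ with hc
  have hc0 : 0 < |c| := abs_pos.mpr hne
  apply approx1_of_near
  intro R hR ε hε
  set ε₀ : ℝ := ε * |c| / ((k.factorial : ℝ) * R ^ k) with hε₀
  have hε₀pos : 0 < ε₀ := by
    have : (0:ℝ) < (k.factorial : ℝ) := by exact_mod_cast k.factorial_pos
    positivity
  -- continuity of the k-th derivative at θ
  have hcont : Continuous (iteratedDeriv k g) := hsm.continuous_iteratedDeriv k (by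
    exact_mod_cast le_top)
  have : ContinuousAt (iteratedDeriv k g) θ := hcont.continuousAt
  rw [Metric.continuousAt_iff] at this
  obtain ⟨δ, hδ, hmod⟩ := this ε₀ hε₀pos
  set lam : ℝ := δ / (2 * R) with hlam
  have hlampos : 0 < lam := by positivity
  have hmod' : ∀ u : ℝ, |u - θ| ≤ lam * R → |iteratedDeriv k g u - c| ≤ ε₀ := by
    intro u hu
    have : dist u θ < δ := by
      rw [Real.dist_eq]
      have : lam * R = δ / 2 := by rw [hlam]; field_simp
      calc |u - θ| ≤ lam * R := hu
        _ = δ / 2 := this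
        _ < δ := by linarith
    exact (hmod this).le
  set a : ℝ := (k.factorial : ℝ) / (lam ^ k * c) with ha
  set S : ℝ → ℝ := fun t => ∑ j ∈ Finset.range k,
    (iteratedDeriv j g θ * lam ^ j / (j.factorial : ℝ)) * t ^ j with hS
  refine ⟨fun t => a * (g (lam * t + θ) - S t), ?_, ?_⟩
  · -- approximability of the comparison function
    apply approx1_smul
    apply approx1_sub
    · exact approx1_affine lam θ hap
    · exact approx1_sum _ _ (fun j hj => approx1_smul _ (ih j (Finset.mem_range.mp hj)))
  · -- closeness to the monomial
    intro t ht
    have hTay := taylor_bound k g hsm θ (lam * R) ε₀ (by positivity) hε₀pos.le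
      hmod' (lam * t + θ) (by
        rw [add_sub_cancel_right, abs_mul, abs_of_pos hlampos]
        exact mul_le_mul_of_nonneg_left ht hlampos.le)
    have hsum : ∑ j ∈ Finset.range (k+1), iteratedDeriv j g θ * (lam * t + θ - θ) ^ j
        / (j.factorial : ℝ) = S t + c * lam ^ k * t ^ k / (k.factorial : ℝ) := by
      rw [Finset.sum_range_succ, add_sub_cancel_right]
      congr 1
      · rw [hS]
        apply Finset.sum_congr rfl
        intro j _
        rw [mul_pow]
        ring
      · rw [mul_pow]
        ring
    rw [hsum] at hTay
    have hk0 : (k.factorial : ℝ) ≠ 0 := by exact_mod_cast k.factorial_ne_zero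
    have hlamk : lam ^ k ≠ 0 := pow_ne_zero _ hlampos.ne'
    have key : t ^ k - a * (g (lam * t + θ) - S t)
        = -(a * (g (lam * t + θ) - (S t + c * lam ^ k * t ^ k / (k.factorial : ℝ)))) := by
      have : a * (c * lam ^ k * t ^ k / (k.factorial : ℝ)) = t ^ k := by
        rw [ha]; field_simp
      nlinarith [this]
    rw [key, abs_neg, abs_mul]
    have haabs : |a| = (k.factorial : ℝ) / (lam ^ k * |c|) := by
      rw [ha, abs_div, abs_mul, abs_pow, abs_of_pos hlampos]
      simp [Nat.abs_cast]
    rw [haabs]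
    calc (k.factorial : ℝ) / (lam ^ k * |c|)
          * |g (lam * t + θ) - (S t + c * lam ^ k * t ^ k / (k.factorial : ℝ))|
        ≤ (k.factorial : ℝ) / (lam ^ k * |c|) * (ε₀ * (lam * R) ^ k) := by
          apply mul_le_mul_of_nonneg_left hTay
          positivity
      _ = ε := by
          rw [hε₀, mul_pow]
          field_simp

theorem approx1_polynomial (hmono : ∀ k : ℕ, Approx1 σ (fun t => t ^ k)) (p : Polynomial ℝ) :
    Approx1 σ (fun t => p.eval t) := by
  have heq : (fun t : ℝ => p.eval t)
      = fun t => ∑ j ∈ Finset.range (p.natDegree + 1), p.coeff j * t ^ j := by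
    funext t
    exact Polynomial.eval_eq_sum_range t
  rw [heq]
  exact approx1_sum _ _ (fun j _ => approx1_smul _ (hmono j))

theorem approx1_continuous_of_good (hσ_cont : Continuous σ)
    (hgood : ∀ k : ℕ, ∃ (g : ℝ → ℝ) (θ : ℝ),
      ContDiff ℝ (⊤ : ℕ∞) g ∧ Approx1 σ g ∧ iteratedDeriv k g θ ≠ 0)
    (f : ℝ → ℝ) (hf : Continuous f) : Approx1 σ f := by
  have hmono := approx1_monomial hσ_cont hgood
  apply approx1_of_near
  intro R hR ε hε
  obtain ⟨p, hp⟩ := exists_polynomial_near_of_continuousOn (-R) R f hf.continuousOn ε hε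
  refine ⟨fun t => p.eval t, approx1_polynomial hmono p, fun t ht => ?_⟩
  have := hp t (abs_le.mp ht)
  rw [abs_sub_comm]
  exact this.le
end

open Finset

section
variable {d : ℕ} {σ : ℝ → ℝ} {K : Set (Fin d → ℝ)}

/-- approximability on `K` by multivariate networks. -/
def ApproxK (σ : ℝ → ℝ) (K : Set (Fin d → ℝ)) (g : (Fin d → ℝ) → ℝ) : Prop :=
  ∀ ε : ℝ, 0 < ε → ∃ (N : ℕ) (c : Fin N → ℝ) (w : Fin N → (Fin d → ℝ)) (b : Fin N → ℝ),
    ∀ x ∈ K, |g x - ∑ i : Fin N, c i * σ ((∑ j : Fin d, w i j * x j) + b i)| ≤ ε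

theorem approxK_zero : ApproxK σ K (fun _ => 0) := by
  intro ε hε
  exact ⟨0, Fin.elim0, Fin.elim0, Fin.elim0, fun x _ => by simp; positivity⟩

theorem approxK_add {g h : (Fin d → ℝ) → ℝ} (hg : ApproxK σ K g) (hh : ApproxK σ K h) :
    ApproxK σ K (fun x => g x + h x) := by
  intro ε hε
  obtain ⟨N, c, w, b, hN⟩ := hg (ε/2) (by positivity)
  obtain ⟨M, c', w', b', hM⟩ := hh (ε/2) (by positivity)
  refine ⟨N + M, Fin.append c c', Fin.append w w', Fin.append b b', fun x hx => ?_⟩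
  rw [Fin.sum_univ_add]
  simp only [Fin.append_left, Fin.append_right]
  have e : g x + h x - (∑ i : Fin N, c i * σ ((∑ j, w i j * x j) + b i)
      + ∑ i : Fin M, c' i * σ ((∑ j, w' i j * x j) + b' i))
      = (g x - ∑ i : Fin N, c i * σ ((∑ j, w i j * x j) + b i))
      + (h x - ∑ i : Fin M, c' i * σ ((∑ j, w' i j * x j) + b' i)) := by ring
  rw [e]
  calc _ ≤ _ := abs_add_le _ _
    _ ≤ ε/2 + ε/2 := add_le_add (hN x hx) (hM x hx)
    _ = ε := by ring

theorem approxK_smul {g : (Fin d → ℝ) → ℝ} (a : ℝ) (hg : ApproxK σ K g) :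
    ApproxK σ K (fun x => a * g x) := by
  intro ε hε
  rcases eq_or_ne a 0 with rfl | ha
  · refine ⟨0, Fin.elim0, Fin.elim0, Fin.elim0, fun x _ => by simp; positivity⟩
  · obtain ⟨N, c, w, b, hN⟩ := hg (ε / |a|) (by positivity)
    refine ⟨N, fun i => a * c i, w, b, fun x hx => ?_⟩
    have e : a * g x - ∑ i : Fin N, a * c i * σ ((∑ j, w i j * x j) + b i)
        = a * (g x - ∑ i : Fin N, c i * σ ((∑ j, w i j * x j) + b i)) := by
      rw [mul_sub, Finset.mul_sum]; ring_nf
    rw [e, abs_mul]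
    calc |a| * |g x - ∑ i : Fin N, c i * σ ((∑ j, w i j * x j) + b i)| ≤ |a| * (ε / |a|) :=
          mul_le_mul_of_nonneg_left (hN x hx) (abs_nonneg a)
      _ = ε := by field_simp

theorem approxK_sum {ι : Type*} (s : Finset ι) (F : ι → (Fin d → ℝ) → ℝ)
    (hF : ∀ i ∈ s, ApproxK σ K (F i)) : ApproxK σ K (fun x => ∑ i ∈ s, F i x) := by
  classical
  induction s using Finset.induction_on with
  | empty => simpa using (approxK_zero (σ := σ) (K := K))
  | insert _ _ hx ih =>
    rename_i a s'
    simp only [Finset.sum_insert hx]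
    exact approxK_add (hF a (Finset.mem_insert_self a s'))
      (ih fun i hi => hF i (Finset.mem_insert_of_mem hi))

theorem approxK_of_near {g : (Fin d → ℝ) → ℝ}
    (h : ∀ ε : ℝ, 0 < ε → ∃ g', ApproxK σ K g' ∧ ∀ x ∈ K, |g x - g' x| ≤ ε) :
    ApproxK σ K g := by
  intro ε hε
  obtain ⟨g', hg', hclose⟩ := h (ε/2) (by positivity)
  obtain ⟨N, c, w, b, hN⟩ := hg' (ε/2) (by positivity)
  refine ⟨N, c, w, b, fun x hx => ?_⟩
  have e : g x - ∑ i : Fin N, c i * σ ((∑ j, w i j * x j) + b i)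
      = (g x - g' x) + (g' x - ∑ i : Fin N, c i * σ ((∑ j, w i j * x j) + b i)) := by ring
  rw [e]
  calc _ ≤ _ := abs_add_le _ _
    _ ≤ ε/2 + ε/2 := add_le_add (hclose x hx) (hN x hx)
    _ = ε := by ring

/-- Ridge functions built from a 1-D approximable profile are approximable on `K`. -/
theorem approxK_ridge (w : Fin d → ℝ) (E1 : ℝ → ℝ) (hE : Approx1 σ E1)
    (R : ℝ) (hR : 0 < R) (hwR : ∀ x ∈ K, |∑ j, w j * x j| ≤ R) :
    ApproxK σ K (fun x => E1 (∑ j, w j * x j)) := by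
  intro ε hε
  obtain ⟨N, c, l, b, hN⟩ := hE R hR ε hε
  refine ⟨N, c, fun i => fun j => l i * w j, b, fun x hx => ?_⟩
  have e : ∀ i : Fin N, (∑ j, (l i * w j) * x j) + b i
      = l i * (∑ j, w j * x j) + b i := by
    intro i
    rw [Finset.mul_sum]
    congr 1
    apply Finset.sum_congr rfl
    intro j _
    ring
  simp only [e]
  exact hN _ (hwR x hx)
end


open Finset

/-- Universal approximation theorem (uniform density, order 0): a continuous,
bounded, non-constant activation yields single-hidden-layer networks that are
uniformly dense in `C(K)` for every compact `K ⊆ ℝ^d`. -/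
theorem universal_approximation_C0
    {d : ℕ} (K : Set (Fin d → ℝ)) (hK : IsCompact K)
    (σ : ℝ → ℝ) (hσ_cont : Continuous σ)
    (hσ_bdd : ∃ M : ℝ, ∀ t : ℝ, |σ t| ≤ M)
    (hσ_nonconst : ∃ s t : ℝ, σ s ≠ σ t)
    (f : (Fin d → ℝ) → ℝ) (hf : ContinuousOn f K)
    (ε : ℝ) (hε : 0 < ε) :
    ∃ (N : ℕ) (c : Fin N → ℝ) (w : Fin N → (Fin d → ℝ)) (b : Fin N → ℝ),
      ∀ x ∈ K, |f x - ∑ i : Fin N, c i * σ ((∑ j : Fin d, w i j * x j) + b i)| ≤ ε := by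
  -- the one-dimensional universal approximation property
  have hgood : ∀ k : ℕ, ∃ (g : ℝ → ℝ) (θ : ℝ),
      ContDiff ℝ (⊤ : ℕ∞) g ∧ Approx1 σ g ∧ iteratedDeriv k g θ ≠ 0 := by
    intro k
    obtain ⟨φ, θ, hne⟩ := good_case hσ_cont hσ_bdd hσ_nonconst k
    exact ⟨bconv φ σ, θ, bconv_contDiff φ hσ_cont, bconv_approx φ hσ_cont, hne⟩
  have h1d : ∀ g : ℝ → ℝ, Continuous g → Approx1 σ g :=
    approx1_continuous_of_good hσ_cont hgood
  -- bound for K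
  obtain ⟨C₀, hC₀⟩ := hK.isBounded.exists_norm_le
  set C : ℝ := max C₀ 0 + 1 with hC
  have hCpos : 0 < C := by positivity
  have hCx : ∀ x ∈ K, ∀ j : Fin d, |x j| ≤ C := by
    intro x hx j
    calc |x j| = ‖x j‖ := rfl
      _ ≤ ‖x‖ := norm_le_pi_norm x j
      _ ≤ C₀ := hC₀ x hx
      _ ≤ C := by rw [hC]; have := le_max_left C₀ (0:ℝ); linarith
  -- it suffices to prove `ApproxK`
  suffices h : ApproxK σ K f by exact h ε hε
  -- compact subtype and Stone–Weierstrass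
  haveI : CompactSpace K := isCompact_iff_compactSpace.mp hK
  set expCM : (Fin d → ℝ) → C(K, ℝ) := fun w =>
    ⟨fun x => Real.exp (∑ j, w j * (x : Fin d → ℝ) j), by
      apply Real.continuous_exp.comp
      apply continuous_finset_sum
      intro j _
      exact (continuous_const.mul ((continuous_apply j).comp continuous_subtype_val))⟩
    with hexpCM
  set E : Set C(K, ℝ) := Set.range expCM with hE
  set Mon : Submonoid C(K, ℝ) :=
    { carrier := E
      one_mem' := by
        refine ⟨0, ?_⟩
        ext x
        simp [hexpCM]
      mul_mem' := by
        rintro a b ⟨wa, rfl⟩ ⟨wb, rfl⟩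
        refine ⟨wa + wb, ?_⟩
        ext x
        simp only [hexpCM, ContinuousMap.coe_mk, ContinuousMap.mul_apply]
        rw [← Real.exp_add, ← Finset.sum_add_distrib]
        congr 1
        apply Finset.sum_congr rfl
        intro j _
        simp [add_mul] } with hMon
  set A : Subalgebra ℝ C(K, ℝ) := Algebra.adjoin ℝ E with hA
  have hsep : A.SeparatesPoints := by
    intro x y hxy
    have : (x : Fin d → ℝ) ≠ (y : Fin d → ℝ) := fun h => hxy (Subtype.ext h)
    obtain ⟨j, hj⟩ := Function.ne_iff.mp this
    refine ⟨_, ⟨expCM (Pi.single j 1), Algebra.subset_adjoin ⟨_, rfl⟩, rfl⟩, ?_⟩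
    have he : ∀ z : K, expCM (Pi.single j 1) z = Real.exp ((z : Fin d → ℝ) j) := by
      intro z
      simp only [hexpCM, ContinuousMap.coe_mk]
      congr 1
      rw [Finset.sum_eq_single j]
      · simp
      · intro i _ hi; simp [Pi.single_eq_of_ne hi]
      · simp
    show expCM (Pi.single j 1) x ≠ expCM (Pi.single j 1) y
    rw [he, he]
    exact fun h => hj (Real.exp_injective h)
  have hdense := ContinuousMap.subalgebra_topologicalClosure_eq_top_of_separatesPoints A hsep
  set fC : C(K, ℝ) := ⟨K.restrict f, hf.restrict⟩ with hfC
  apply approxK_of_near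
  intro ε' hε'
  have hmem : fC ∈ A.topologicalClosure := by rw [hdense]; trivial
  have hclos : fC ∈ closure (A : Set C(K, ℝ)) := hmem
  rw [Metric.mem_closure_iff] at hclos
  obtain ⟨g, hgA, hgdist⟩ := hclos ε' hε'
  -- write `g` as a linear combination of exponentials
  have hgspan : g ∈ Submodule.span ℝ E := by
    have h1 : g ∈ Subalgebra.toSubmodule (Algebra.adjoin ℝ E) := hgA
    rw [Algebra.adjoin_eq_span] at h1
    have hEM : E = (Mon : Set C(K, ℝ)) := rfl
    have h2 : Submonoid.closure E = Mon := by
      rw [hEM]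
      exact Submonoid.closure_eq Mon
    rw [h2] at h1
    exact h1
  rw [Submodule.mem_span_set'] at hgspan
  obtain ⟨n, cs, gs, hgsum⟩ := hgspan
  -- choose weight vectors
  have hws : ∀ i : Fin n, ∃ w : Fin d → ℝ, expCM w = (gs i : C(K, ℝ)) := fun i => (gs i).2
  choose ws hws using hws
  -- the comparison function
  refine ⟨fun x => ∑ i : Fin n, cs i * Real.exp (∑ j, ws i j * x j), ?_, ?_⟩
  · -- it is ApproxK
    apply approxK_sum
    intro i _
    apply approxK_smul
    set R : ℝ := (∑ j, |ws i j|) * C + 1 with hR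
    have hRpos : 0 < R := by
      rw [hR]
      have : (0:ℝ) ≤ (∑ j, |ws i j|) * C := by positivity
      linarith
    apply approxK_ridge (ws i) Real.exp (h1d Real.exp Real.continuous_exp) R hRpos
    intro x hx
    calc |∑ j, ws i j * x j| ≤ ∑ j, |ws i j * x j| := Finset.abs_sum_le_sum_abs _ _
      _ ≤ ∑ j, |ws i j| * C := by
          apply Finset.sum_le_sum
          intro j _
          rw [abs_mul]
          exact mul_le_mul_of_nonneg_left (hCx x hx j) (abs_nonneg _)
      _ = (∑ j, |ws i j|) * C := by rw [Finset.sum_mul]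
      _ ≤ R := by rw [hR]; linarith
  · -- it is ε'-close to f on K
    intro x hx
    have h1 : f x = fC ⟨x, hx⟩ := rfl
    have h2 : (∑ i : Fin n, cs i * Real.exp (∑ j, ws i j * x j)) = g ⟨x, hx⟩ := by
      rw [← hgsum, ContinuousMap.sum_apply]
      apply Finset.sum_congr rfl
      intro i _
      rw [ContinuousMap.smul_apply, smul_eq_mul]
      congr 1
      rw [← hws i]
      rfl
    show |f x - ∑ i : Fin n, cs i * Real.exp (∑ j, ws i j * x j)| ≤ ε'
    rw [h1, h2]
    calc |fC ⟨x, hx⟩ - g ⟨x, hx⟩| = dist (fC ⟨x, hx⟩) (g ⟨x, hx⟩) := (Real.dist_eq _ _).symm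
      _ ≤ dist fC g := ContinuousMap.dist_apply_le_dist _
      _ ≤ ε' := hgdist.le
end Riemann
end

section
/- Define g : ℝ³ → ℝ by g(x, y, z) = 5 + 0.2x + 0.4y + 0.6z + 0.1xy + 0.2yz + 0.3zx + 0.7xyz, k : ℝ³ → ℝ by k = g², and φ : ℝ³ → ℝ by φ(x, y, z) = x·y·z / g(x, y, z). Then g(x, y, z) > 0 for all (x, y, z) ∈ [0,1]³, and at every point of the open unit cube (0,1)³ one has ∂_x(k ∂_x φ) + ∂_y(k ∂_y φ) + ∂_z(k ∂_z φ) = 0; moreover φ(0, y, z) = 0, φ(x, 0, z) = 0 and φ(x, y, 0) = 0 for all x, y, z ∈ [0,1]. -/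
set_option maxHeartbeats 2000000

/-- Partial derivative in the `x` direction of a function on `ℝ³ = ℝ × ℝ × ℝ`. -/
noncomputable def px (f : ℝ × ℝ × ℝ → ℝ) (p : ℝ × ℝ × ℝ) : ℝ :=
  fderiv ℝ f p (1, 0, 0)

/-- Partial derivative in the `y` direction. -/
noncomputable def py (f : ℝ × ℝ × ℝ → ℝ) (p : ℝ × ℝ × ℝ) : ℝ :=
  fderiv ℝ f p (0, 1, 0)

/-- Partial derivative in the `z` direction. -/
noncomputable def pz (f : ℝ × ℝ × ℝ → ℝ) (p : ℝ × ℝ × ℝ) : ℝ :=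
  fderiv ℝ f p (0, 0, 1)

open ContinuousLinearMap

/-- Case 2 of the paper: for the 3D material gradation `k = g²` with
`g = 5 + 0.2x + 0.4y + 0.6z + 0.1xy + 0.2yz + 0.3zx + 0.7xyz`, the potential
`φ = xyz/g` satisfies `g > 0` on the closed unit cube, `div(k ∇φ) = 0` on the
open unit cube, and the homogeneous Dirichlet conditions on the faces
`x = 0`, `y = 0`, `z = 0`. -/
theorem case2_exact_solution
    (g k φ : ℝ × ℝ × ℝ → ℝ)
    (hg : ∀ p : ℝ × ℝ × ℝ,
      g p = 5 + 0.2 * p.1 + 0.4 * p.2.1 + 0.6 * p.2.2 + 0.1 * (p.1 * p.2.1)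
        + 0.2 * (p.2.1 * p.2.2) + 0.3 * (p.2.2 * p.1) + 0.7 * (p.1 * p.2.1 * p.2.2))
    (hk : ∀ p : ℝ × ℝ × ℝ, k p = (g p) ^ 2)
    (hφ : ∀ p : ℝ × ℝ × ℝ, φ p = p.1 * p.2.1 * p.2.2 / g p) :
    (∀ x ∈ Set.Icc (0 : ℝ) 1, ∀ y ∈ Set.Icc (0 : ℝ) 1, ∀ z ∈ Set.Icc (0 : ℝ) 1,
      0 < g (x, y, z))
    ∧ (∀ x ∈ Set.Ioo (0 : ℝ) 1, ∀ y ∈ Set.Ioo (0 : ℝ) 1, ∀ z ∈ Set.Ioo (0 : ℝ) 1,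
      px (fun q => k q * px φ q) (x, y, z) + py (fun q => k q * py φ q) (x, y, z)
        + pz (fun q => k q * pz φ q) (x, y, z) = 0)
    ∧ (∀ y ∈ Set.Icc (0 : ℝ) 1, ∀ z ∈ Set.Icc (0 : ℝ) 1, φ (0, y, z) = 0)
    ∧ (∀ x ∈ Set.Icc (0 : ℝ) 1, ∀ z ∈ Set.Icc (0 : ℝ) 1, φ (x, 0, z) = 0)
    ∧ (∀ x ∈ Set.Icc (0 : ℝ) 1, ∀ y ∈ Set.Icc (0 : ℝ) 1, φ (x, y, 0) = 0) := by
  -- positivity of g on the closed cube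
  have hgpos : ∀ x ∈ Set.Icc (0 : ℝ) 1, ∀ y ∈ Set.Icc (0 : ℝ) 1,
      ∀ z ∈ Set.Icc (0 : ℝ) 1, 0 < g (x, y, z) := by
    intro x hx y hy z hz
    rw [hg]
    dsimp only
    nlinarith [hx.1, hy.1, hz.1, mul_nonneg hx.1 hy.1, mul_nonneg hy.1 hz.1,
      mul_nonneg hz.1 hx.1, mul_nonneg (mul_nonneg hx.1 hy.1) hz.1]
  -- basic derivative facts at an arbitrary point
  have hx' : ∀ q : ℝ × ℝ × ℝ, HasFDerivAt (fun p : ℝ × ℝ × ℝ => p.1)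
      (fst ℝ ℝ (ℝ × ℝ)) q := fun _ => hasFDerivAt_fst
  have hy' : ∀ q : ℝ × ℝ × ℝ, HasFDerivAt (fun p : ℝ × ℝ × ℝ => p.2.1)
      ((fst ℝ ℝ ℝ).comp (snd ℝ ℝ (ℝ × ℝ))) q :=
    fun q => hasFDerivAt_fst.comp q hasFDerivAt_snd
  have hz' : ∀ q : ℝ × ℝ × ℝ, HasFDerivAt (fun p : ℝ × ℝ × ℝ => p.2.2)
      ((snd ℝ ℝ ℝ).comp (snd ℝ ℝ (ℝ × ℝ))) q :=
    fun q => hasFDerivAt_snd.comp q hasFDerivAt_snd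
  refine ⟨hgpos, ?_, ?_, ?_, ?_⟩
  · intro x hxI y hyI z hzI
    set p : ℝ × ℝ × ℝ := (x, y, z) with hpdef
    have hp0 : g p ≠ 0 :=
      ne_of_gt (hgpos x (Set.mem_Icc_of_Ioo hxI) y (Set.mem_Icc_of_Ioo hyI)
        z (Set.mem_Icc_of_Ioo hzI))
    have hcont : Continuous g := by
      have hgfun : g = fun p : ℝ × ℝ × ℝ => 5 + 0.2 * p.1 + 0.4 * p.2.1 + 0.6 * p.2.2
          + 0.1 * (p.1 * p.2.1) + 0.2 * (p.2.1 * p.2.2) + 0.3 * (p.2.2 * p.1)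
          + 0.7 * (p.1 * p.2.1 * p.2.2) := funext hg
      rw [hgfun]; fun_prop
    have hmem : ∀ᶠ q in nhds p, g q ≠ 0 := hcont.continuousAt.eventually_ne hp0
    -- the key pointwise identity: k ∂ᵢφ is polynomial in q
    have hGat : ∀ q : ℝ × ℝ × ℝ, HasFDerivAt g
        (0 + ((0.2 : ℝ)) • fst ℝ ℝ (ℝ × ℝ) + ((0.4 : ℝ)) • (fst ℝ ℝ ℝ).comp (snd ℝ ℝ (ℝ × ℝ))
          + ((0.6 : ℝ)) • (snd ℝ ℝ ℝ).comp (snd ℝ ℝ (ℝ × ℝ))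
          + ((0.1 : ℝ)) • (q.1 • (fst ℝ ℝ ℝ).comp (snd ℝ ℝ (ℝ × ℝ)) + q.2.1 • fst ℝ ℝ (ℝ × ℝ))
          + ((0.2 : ℝ)) • (q.2.1 • (snd ℝ ℝ ℝ).comp (snd ℝ ℝ (ℝ × ℝ))
              + q.2.2 • (fst ℝ ℝ ℝ).comp (snd ℝ ℝ (ℝ × ℝ)))
          + ((0.3 : ℝ)) • (q.2.2 • fst ℝ ℝ (ℝ × ℝ) + q.1 • (snd ℝ ℝ ℝ).comp (snd ℝ ℝ (ℝ × ℝ)))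
          + ((0.7 : ℝ)) • ((q.1 * q.2.1) • (snd ℝ ℝ ℝ).comp (snd ℝ ℝ (ℝ × ℝ))
              + q.2.2 • (q.1 • (fst ℝ ℝ ℝ).comp (snd ℝ ℝ (ℝ × ℝ))
                + q.2.1 • fst ℝ ℝ (ℝ × ℝ)))) q := by
      intro q
      have hGc := (((((((hasFDerivAt_const (5:ℝ) q).add ((hx' q).const_mul 0.2)).add
          ((hy' q).const_mul 0.4)).add ((hz' q).const_mul 0.6)).add
          (((hx' q).mul (hy' q)).const_mul 0.1)).add
          (((hy' q).mul (hz' q)).const_mul 0.2)).add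
          (((hz' q).mul (hx' q)).const_mul 0.3)).add
          ((((hx' q).mul (hy' q)).mul (hz' q)).const_mul 0.7)
      exact hGc.congr_of_eventuallyEq (f₁ := g) (Filter.Eventually.of_forall fun r => hg r)
    have hkdir : ∀ q : ℝ × ℝ × ℝ, g q ≠ 0 →
        (k q * px φ q = g q * (q.2.1 * q.2.2) - q.1 * q.2.1 * q.2.2 *
            (0.2 + 0.1 * q.2.1 + 0.3 * q.2.2 + 0.7 * (q.2.1 * q.2.2)))
        ∧ (k q * py φ q = g q * (q.1 * q.2.2) - q.1 * q.2.1 * q.2.2 *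
            (0.4 + 0.1 * q.1 + 0.2 * q.2.2 + 0.7 * (q.1 * q.2.2)))
        ∧ (k q * pz φ q = g q * (q.1 * q.2.1) - q.1 * q.2.1 * q.2.2 *
            (0.6 + 0.2 * q.2.1 + 0.3 * q.1 + 0.7 * (q.1 * q.2.1))) := by
      intro q hq
      have hN := ((hx' q).mul (hy' q)).mul (hz' q)
      have hinv := (hasFDerivAt_inv' hq).comp q (hGat q)
      have hφq := (hN.mul hinv).congr_of_eventuallyEq (f₁ := φ)
        (Filter.Eventually.of_forall fun r => by
          simp only [hφ, Function.comp_apply, div_eq_mul_inv, Pi.mul_apply])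
      refine ⟨?_, ?_, ?_⟩ <;>
      · simp only [px, py, pz, hφq.fderiv, hk]
        simp [mulLeftRight_apply, Function.comp]
        field_simp
        ring
    have hev1 : (fun q => k q * px φ q) =ᶠ[nhds p]
        (fun q : ℝ × ℝ × ℝ => g q * (q.2.1 * q.2.2) - q.1 * q.2.1 * q.2.2 *
          (0.2 + 0.1 * q.2.1 + 0.3 * q.2.2 + 0.7 * (q.2.1 * q.2.2))) :=
      hmem.mono fun q hq => (hkdir q hq).1
    have hev2 : (fun q => k q * py φ q) =ᶠ[nhds p]
        (fun q : ℝ × ℝ × ℝ => g q * (q.1 * q.2.2) - q.1 * q.2.1 * q.2.2 *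
          (0.4 + 0.1 * q.1 + 0.2 * q.2.2 + 0.7 * (q.1 * q.2.2))) :=
      hmem.mono fun q hq => (hkdir q hq).2.1
    have hev3 : (fun q => k q * pz φ q) =ᶠ[nhds p]
        (fun q : ℝ × ℝ × ℝ => g q * (q.1 * q.2.1) - q.1 * q.2.1 * q.2.2 *
          (0.6 + 0.2 * q.2.1 + 0.3 * q.1 + 0.7 * (q.1 * q.2.1))) :=
      hmem.mono fun q hq => (hkdir q hq).2.2
    have hgx := (((hasFDerivAt_const (0.2:ℝ) p).add ((hy' p).const_mul 0.1)).add
      ((hz' p).const_mul 0.3)).add (((hy' p).mul (hz' p)).const_mul 0.7)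
    have hgy := (((hasFDerivAt_const (0.4:ℝ) p).add ((hx' p).const_mul 0.1)).add
      ((hz' p).const_mul 0.2)).add (((hx' p).mul (hz' p)).const_mul 0.7)
    have hgz := (((hasFDerivAt_const (0.6:ℝ) p).add ((hy' p).const_mul 0.2)).add
      ((hx' p).const_mul 0.3)).add (((hx' p).mul (hy' p)).const_mul 0.7)
    have hF1 := ((hGat p).mul ((hy' p).mul (hz' p))).sub
      ((((hx' p).mul (hy' p)).mul (hz' p)).mul hgx)
    have hF2 := ((hGat p).mul ((hx' p).mul (hz' p))).sub
      ((((hx' p).mul (hy' p)).mul (hz' p)).mul hgy)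
    have hF3 := ((hGat p).mul ((hx' p).mul (hy' p))).sub
      ((((hx' p).mul (hy' p)).mul (hz' p)).mul hgz)
    have e1 : px (fun q => k q * px φ q) p = 0 := by
      show fderiv ℝ (fun q => k q * px φ q) p (1, 0, 0) = 0
      rw [hev1.fderiv_eq]; erw [hF1.fderiv]
      simp
      ring
    have e2 : py (fun q => k q * py φ q) p = 0 := by
      show fderiv ℝ (fun q => k q * py φ q) p (0, 1, 0) = 0
      rw [hev2.fderiv_eq]; erw [hF2.fderiv]
      simp
      ring
    have e3 : pz (fun q => k q * pz φ q) p = 0 := by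
      show fderiv ℝ (fun q => k q * pz φ q) p (0, 0, 1) = 0
      rw [hev3.fderiv_eq]; erw [hF3.fderiv]
      simp
      ring
    rw [e1, e2, e3]
    norm_num
  · intro y _ z _; rw [hφ]; simp
  · intro x _ z _; rw [hφ]; simp
  · intro x _ y _; rw [hφ]; simp
end
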